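/- For every natural number n ≥ 1: for each i with 1 ≤ i ≤ n−1, the number of rim vertices of G_n whose degree in G_n equals i is exactly 2^i·3^{n−1−i}; the number of rim vertices of degree n is exactly 2^n (these are precisely the leaves of G_n); and every rim vertex of G_n has degree i for some i with 1 ≤ i ≤ n. -/

import Mathlib

namespace DSFN

/-- Vertex set of the `n`-th generation graph `G n` of the Barabási–Ravasz–Vicsek
deterministic scale-free network: `Fin n → Fin 3`, which is canonically
`{0,1,2} × V(G (n-1))` (first coordinate = which of the three copies). -/
abbrev Vert (n : ℕ) : Type := Fin n → Fin 3

/-- The root of `G n`: the all-zero vertex. -/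
def root (n : ℕ) : Vert n := fun _ => 0

/-- The leaf set of `G n`: recursively, leaves of `G n` are the vertices `(t, ℓ)` with
`t ∈ {1,2}` and `ℓ` a leaf of `G (n-1)`; equivalently all coordinates are nonzero. -/
def IsLeaf {n : ℕ} (v : Vert n) : Prop := ∀ i, v i ≠ 0

/-- The hub vertices of `G n`: the unique hub of `G 1` is the root `0`, and the hubs of
`G n` are the vertices `(t, h)` with `h` a hub of `G (n-1)`; equivalently the last
coordinate vanishes. All other vertices are rim vertices. -/
def IsHub {n : ℕ} (v : Vert n) : Prop := ∀ i : Fin n, (i : ℕ) + 1 = n → v i = 0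

/-- Adjacency in `G n` : each of the three copies of `G (n-1)` is an induced subgraph,
and in addition the root is joined to every vertex `(t, ℓ)` with `t ∈ {1,2}` and
`ℓ` a leaf of `G (n-1)`. -/
def Adj : (n : ℕ) → Vert n → Vert n → Prop
  | 0 => fun _ _ => False
  | n + 1 => fun u v =>
      (u 0 = v 0 ∧ Adj n (Fin.tail u) (Fin.tail v)) ∨
      (u = root (n + 1) ∧ (v 0 = 1 ∨ v 0 = 2) ∧ IsLeaf (Fin.tail v)) ∨
      (v = root (n + 1) ∧ (u 0 = 1 ∨ u 0 = 2) ∧ IsLeaf (Fin.tail u))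

instance instDecIsLeaf {n : ℕ} : DecidablePred (IsLeaf (n := n)) := fun v =>
  inferInstanceAs (Decidable (∀ i, v i ≠ 0))

instance instDecIsHub {n : ℕ} : DecidablePred (IsHub (n := n)) := fun v =>
  inferInstanceAs (Decidable (∀ i : Fin n, (i : ℕ) + 1 = n → v i = 0))

instance instDecAdj : (n : ℕ) → DecidableRel (Adj n)
  | 0 => fun _ _ => inferInstanceAs (Decidable False)
  | n + 1 => fun u v =>
      letI := instDecAdj n
      inferInstanceAs (Decidable
        ((u 0 = v 0 ∧ Adj n (Fin.tail u) (Fin.tail v)) ∨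
        (u = root (n + 1) ∧ (v 0 = 1 ∨ v 0 = 2) ∧ IsLeaf (Fin.tail v)) ∨
        (v = root (n + 1) ∧ (u 0 = 1 ∨ u 0 = 2) ∧ IsLeaf (Fin.tail u))))

theorem adj_symm : ∀ (n : ℕ) (u v : Vert n), Adj n u v → Adj n v u
  | 0, _, _, h => h.elim
  | n + 1, _, _, h =>
      h.elim (fun h1 => Or.inl ⟨h1.1.symm, adj_symm n _ _ h1.2⟩)
        (fun h2 => h2.elim (fun a => Or.inr (Or.inr a)) (fun a => Or.inr (Or.inl a)))

theorem adj_irrefl : (n : ℕ) → ∀ v : Vert n, ¬ Adj n v v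
  | 0 => fun _ h => h
  | n + 1 => by
      intro v h
      rcases h with ⟨-, h2⟩ | ⟨h1, h2, -⟩ | ⟨h1, h2, -⟩
      · exact adj_irrefl n (Fin.tail v) h2
      · rw [h1] at h2
        exact h2.elim (fun c => absurd c (by simp [root])) (fun c => absurd c (by simp [root]))
      · rw [h1] at h2
        exact h2.elim (fun c => absurd c (by simp [root])) (fun c => absurd c (by simp [root]))

/-- The `n`-th generation of the Barabási–Ravasz–Vicsek deterministic scale-free
network, as a simple graph (for `n ≥ 1`; `G 0` is the trivial one-vertex graph). -/
def G (n : ℕ) : SimpleGraph (Vert n) where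
  Adj := Adj n
  symm := ⟨by intro u v h; exact adj_symm n u v h⟩
  loopless := ⟨by intro v h; exact adj_irrefl n v h⟩

instance (n : ℕ) : DecidableRel (G n).Adj := instDecAdj n

end DSFN

/-!
A vertex `(t, w)` of `G (n+1)` other than the root is adjacent to the neighbours of `w` inside
its own copy, and to the root exactly when `t ≠ 0` and `w` is a leaf. Unwinding this recursion,
the degree of a rim vertex is the length of the longest suffix of its coordinate string
consisting of nonzero digits. There are `2 ^ i * 3 ^ (n - i)` strings whose last `i` digits
are nonzero, and taking differences gives the distribution.
-/

open Finset

theorem Fintype.card_filter_forall_suffix {α : Type*} [Fintype α] (p : α → Prop)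
    [DecidablePred p] {n i : ℕ} (hi : i ≤ n) :
    #{v : Fin n → α | ∀ k : Fin n, n - i ≤ k → p (v k)} =
      #{a | p a} ^ i * Fintype.card α ^ (n - i) := by
  let t : Fin n → Finset α := fun k => if n - i ≤ k then univ.filter p else univ
  have hfilter : ({v : Fin n → α | ∀ k : Fin n, n - i ≤ k → p (v k)} : Finset _) =
      Fintype.piFinset t := by
    ext v
    simp only [mem_filter, mem_univ, true_and, Fintype.mem_piFinset, t]
    refine forall_congr' fun k => ?_
    split_ifs <;> simp_all
  let f : ℕ → ℕ := fun k => if n - i ≤ k then #{a | p a} else Fintype.card α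
  calc #{v : Fin n → α | ∀ k : Fin n, n - i ≤ k → p (v k)}
      = ∏ k ∈ range (n - i + i), f k := by
        rw [hfilter, Fintype.card_piFinset, Nat.sub_add_cancel hi, ← Fin.prod_univ_eq_prod_range]
        exact Finset.prod_congr rfl fun k _ => by simp only [t, f]; split_ifs <;> rfl
    _ = #{a | p a} ^ i * Fintype.card α ^ (n - i) := by
        rw [prod_range_add, mul_comm]
        congr 1
        · rw [Finset.prod_congr rfl fun k _ => if_pos (by omega)]
          simp
        · rw [Finset.prod_congr rfl fun k hk => if_neg (by simp at hk; omega)]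
          simp

namespace DSFN

/-- The length of the longest suffix of `v` whose coordinates are all nonzero. -/
def rimDegree : (n : ℕ) → Vert n → ℕ
  | 0, _ => 0
  | n + 1, v => rimDegree n (Fin.tail v) + if v 0 ≠ 0 ∧ IsLeaf (Fin.tail v) then 1 else 0

theorem rimDegree_le : ∀ {n : ℕ} (v : Vert n), rimDegree n v ≤ n
  | 0, _ => le_rfl
  | n + 1, v => by
    have := rimDegree_le (Fin.tail v)
    rw [rimDegree]
    split_ifs <;> omega

theorem le_rimDegree_iff : ∀ {n i : ℕ} (v : Vert n), i ≤ n →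
    (i ≤ rimDegree n v ↔ ∀ k : Fin n, n - i ≤ k → v k ≠ 0)
  | 0, i, v, _ => by simp [rimDegree]; omega
  | n + 1, i, v, hi => by
    have hle := rimDegree_le (Fin.tail v)
    have hleaf : n ≤ rimDegree n (Fin.tail v) ↔ IsLeaf (Fin.tail v) := by
      simpa [IsLeaf] using le_rimDegree_iff (Fin.tail v) le_rfl
    rw [rimDegree, Fin.forall_fin_succ]
    simp only [Fin.val_zero, Fin.val_succ]
    rcases hi.lt_or_eq with hi | rfl
    · have ih := le_rimDegree_iff (i := i) (Fin.tail v) (by omega)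
      simp only [Fin.tail] at ih
      have hsucc : ∀ k : ℕ, n + 1 - i ≤ k + 1 ↔ n - i ≤ k := fun k => by omega
      simp only [hsucc, ← ih, show ¬ n + 1 - i ≤ 0 by omega, false_implies, true_and]
      split_ifs with h
      · have := hleaf.2 h.2
        omega
      · omega
    · simp only [Nat.sub_self, zero_le, true_implies]
      change _ ↔ v 0 ≠ 0 ∧ IsLeaf (Fin.tail v)
      split_ifs with h
      · exact iff_of_true (by have := hleaf.2 h.2; omega) h
      · exact iff_of_false (by omega) h

theorem rimDegree_eq_self_iff {n : ℕ} (v : Vert n) : rimDegree n v = n ↔ IsLeaf v := by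
  rw [le_antisymm_iff, and_iff_right (rimDegree_le v), le_rimDegree_iff v le_rfl]
  simp [IsLeaf]

theorem not_isHub_iff_one_le_rimDegree : ∀ {n : ℕ} (v : Vert n), ¬IsHub v ↔ 1 ≤ rimDegree n v
  | 0, v => by simp [IsHub, rimDegree]
  | n + 1, v => by
    rw [le_rimDegree_iff v (by omega)]
    simp [IsHub, Fin.forall_fin_succ', fun i : Fin n => i.is_lt.ne]

theorem isHub_tail_iff {n : ℕ} (v : Vert (n + 2)) : IsHub (Fin.tail v) ↔ IsHub v := by
  simp [IsHub, Fin.forall_fin_succ, Fin.tail]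

theorem adj_succ_iff_of_ne_root {n : ℕ} {v : Vert (n + 1)} (hv : v ≠ root (n + 1))
    (u : Vert (n + 1)) :
    (G (n + 1)).Adj v u ↔ (v 0 = u 0 ∧ (G n).Adj (Fin.tail v) (Fin.tail u)) ∨
      (u = root (n + 1) ∧ v 0 ≠ 0 ∧ IsLeaf (Fin.tail v)) := by
  have h12 : ∀ a : Fin 3, a = 1 ∨ a = 2 ↔ a ≠ 0 := by decide
  change Adj (n + 1) v u ↔ _
  simp only [Adj, hv, h12, false_and, false_or]
  rfl

theorem card_filter_adj_tail {n : ℕ} (v : Vert (n + 1)) :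
    #{u : Vert (n + 1) | v 0 = u 0 ∧ (G n).Adj (Fin.tail v) (Fin.tail u)} =
      (G n).degree (Fin.tail v) := by
  let e : Vert n ↪ Vert (n + 1) :=
    ⟨Fin.cons (α := fun _ => Fin 3) (v 0), Fin.cons_right_injective (α := fun _ => Fin 3) _⟩
  rw [← SimpleGraph.card_neighborFinset_eq_degree, ← card_map e]
  congr 1
  ext u
  simp only [mem_filter, mem_univ, true_and, mem_map, SimpleGraph.mem_neighborFinset,
    Function.Embedding.coeFn_mk, e]
  constructor
  · rintro ⟨h0, hadj⟩
    exact ⟨Fin.tail u, hadj, h0 ▸ Fin.cons_self_tail u⟩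
  · rintro ⟨w, hw, rfl⟩
    simpa using hw

theorem degree_succ_of_ne_root {n : ℕ} {v : Vert (n + 1)} (hv : v ≠ root (n + 1)) :
    (G (n + 1)).degree v =
      (G n).degree (Fin.tail v) + if v 0 ≠ 0 ∧ IsLeaf (Fin.tail v) then 1 else 0 := by
  rw [← SimpleGraph.card_neighborFinset_eq_degree, SimpleGraph.neighborFinset_eq_filter,
    filter_congr fun u _ => adj_succ_iff_of_ne_root hv u, filter_or, card_union_of_disjoint,
    card_filter_adj_tail]
  · congr 1
    split_ifs with h <;> simp [h, filter_eq']
  · rw [disjoint_filter]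
    rintro u - ⟨h0, -⟩ ⟨rfl, hne, -⟩
    exact hne h0

theorem degree_eq_rimDegree : ∀ {n : ℕ} {v : Vert n}, ¬IsHub v → (G n).degree v = rimDegree n v
  | 0, v, hv => absurd (fun i => i.elim0) hv
  | n + 1, v, hv => by
    rw [degree_succ_of_ne_root (by rintro rfl; exact hv fun _ _ => rfl), rimDegree]
    congr 1
    cases n with
    | zero => exact SimpleGraph.degree_eq_zero_of_subsingleton _
    | succ n => exact degree_eq_rimDegree (by rwa [isHub_tail_iff])

theorem card_le_rimDegree {n i : ℕ} (hi : i ≤ n) :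
    #{v : Vert n | i ≤ rimDegree n v} = 2 ^ i * 3 ^ (n - i) := by
  simp_rw [le_rimDegree_iff _ hi]
  exact Fintype.card_filter_forall_suffix (· ≠ (0 : Fin 3)) hi

theorem card_rimDegree_eq_of_lt {n i : ℕ} (hi : i < n) :
    #{v : Vert n | rimDegree n v = i} = 2 ^ i * 3 ^ (n - 1 - i) := by
  have hsplit : #{v : Vert n | i ≤ rimDegree n v} =
      #{v : Vert n | rimDegree n v = i} + #{v : Vert n | i + 1 ≤ rimDegree n v} := by
    rw [← card_union_of_disjoint (disjoint_filter.2 fun v _ h => by omega), ← filter_or]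
    congr 1
    ext v
    simp only [mem_filter, mem_univ, true_and]
    omega
  rw [card_le_rimDegree hi.le, card_le_rimDegree hi] at hsplit
  obtain ⟨m, rfl⟩ : ∃ m, n = i + 1 + m := ⟨n - (i + 1), by omega⟩
  rw [show i + 1 + m - i = m + 1 by omega, show i + 1 + m - (i + 1) = m by omega, pow_succ,
    pow_succ] at hsplit
  rw [show i + 1 + m - 1 - i = m by omega]
  linarith

theorem card_rimDegree_eq_self (n : ℕ) : #{v : Vert n | rimDegree n v = n} = 2 ^ n := by
  simpa [le_antisymm_iff, rimDegree_le] using card_le_rimDegree (le_refl n)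

theorem not_isHub_and_degree_eq_iff {n i : ℕ} (v : Vert n) :
    (¬IsHub v ∧ (G n).degree v = i) ↔ (1 ≤ i ∧ rimDegree n v = i) := by
  constructor
  · rintro ⟨hrim, rfl⟩
    rw [degree_eq_rimDegree hrim]
    exact ⟨(not_isHub_iff_one_le_rimDegree v).1 hrim, rfl⟩
  · rintro ⟨hi, rfl⟩
    have hrim := (not_isHub_iff_one_le_rimDegree v).2 hi
    exact ⟨hrim, degree_eq_rimDegree hrim⟩

end DSFN

open DSFN in
/-- For every `n ≥ 1`: for each `1 ≤ i ≤ n - 1` the number of rim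
vertices of `G n` of degree `i` is exactly `2 ^ i * 3 ^ (n-1-i)`; the number of rim
vertices of degree `n` is exactly `2 ^ n`, and these are precisely the leaves of `G n`;
and every rim vertex has degree `i` for some `1 ≤ i ≤ n`. -/
theorem dsfn_rim_degree_distribution (n : ℕ) (hn : 1 ≤ n) :
    (∀ i : ℕ, 1 ≤ i → i ≤ n - 1 →
      (Finset.univ.filter
        (fun v : Vert n => ¬ IsHub v ∧ (G n).degree v = i)).card
        = 2 ^ i * 3 ^ (n - 1 - i)) ∧
    (Finset.univ.filter
        (fun v : Vert n => ¬ IsHub v ∧ (G n).degree v = n)).card = 2 ^ n ∧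
    (∀ v : Vert n, (¬ IsHub v ∧ (G n).degree v = n) ↔ IsLeaf v) ∧
    (∀ v : Vert n, ¬ IsHub v → ∃ i : ℕ, 1 ≤ i ∧ i ≤ n ∧ (G n).degree v = i) := by
  refine ⟨fun i hi1 hi2 => ?_, ?_, fun v => ?_, fun v hv => ?_⟩
  · simp only [not_isHub_and_degree_eq_iff, hi1, true_and]
    exact card_rimDegree_eq_of_lt (by omega)
  · simp only [not_isHub_and_degree_eq_iff, hn, true_and]
    exact card_rimDegree_eq_self n
  · rw [not_isHub_and_degree_eq_iff, rimDegree_eq_self_iff, and_iff_right hn]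
  · obtain ⟨hi, hdeg⟩ := (not_isHub_and_degree_eq_iff v).1 ⟨hv, rfl⟩
    exact ⟨_, hi, hdeg ▸ rimDegree_le v, rfl⟩
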